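/- arXiv:2602.14984 — 4 statements merged into one kernel-verified Lean document; each statement's English description precedes it below -/
import Mathlib

section
/- Let G be a finite connected multigraph and X a subset of vertices such that vol_G(X) ≤ vol_G(G)/2 and e_G(X, G\X) / vol_G(X) < κ² (a κ²-bad set). Let C₁,...,C_r be the connected components of G\X ordered by decreasing volume, and set Y = X ∪ C₂ ∪ ... ∪ C_r. Then e_G(Y, G\Y)/vol_G(Y) ≤ e_G(X, G\X)/vol_G(X), and G\Y = C₁ is connected. -/
open Finset
open scoped Classical

-- `m x y` is the number of oriented edges (darts) from `x` to `y` in a multigraph;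
-- a loop at `x` contributes two darts to `m x x`.

/-- Number of oriented edges from `X` to `Y`. -/
def eG {V : Type*} [DecidableEq V] (m : V → V → ℕ) (X Y : Finset V) : ℕ :=
  ∑ x ∈ X, ∑ y ∈ Y, m x y

/-- Volume of `X` inside the subgraph induced on `A`. -/
def volOn {V : Type*} [DecidableEq V] (m : V → V → ℕ) (A X : Finset V) : ℕ :=
  eG m X A

/-- The subgraph induced on `X` is connected. -/
def ConnOn {V : Type*} [DecidableEq V] (m : V → V → ℕ) (X : Finset V) : Prop :=
  ∀ x ∈ X, ∀ y ∈ X,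
    Relation.ReflTransGen (fun a b => a ∈ X ∧ b ∈ X ∧ 0 < m a b) x y

/-- `X` is a `κ`-bad set of the subgraph induced on `A`. -/
def BadSet {V : Type*} [DecidableEq V] (m : V → V → ℕ) (κ : ℝ) (A X : Finset V) : Prop :=
  X ⊆ A ∧ X.Nonempty ∧ ConnOn m X ∧
    2 * (volOn m A X : ℝ) ≤ (volOn m A A : ℝ) ∧
    (eG m X (A \ X) : ℝ) < κ * (volOn m A X : ℝ)

/-- `X` is a strong `κ`-bad set of the subgraph induced on `A`. -/
def StrongBadSet {V : Type*} [DecidableEq V] (m : V → V → ℕ) (κ : ℝ) (A X : Finset V) : Prop :=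
  BadSet m κ A X ∧ ConnOn m (A \ X)

/-- The set of `κ`-isolated vertices of the whole graph. -/
noncomputable def Isol {V : Type*} [Fintype V] [DecidableEq V] (m : V → V → ℕ) (κ : ℝ) :
    Finset V :=
  univ.filter (fun v => ∃ X, BadSet m κ univ X ∧ v ∈ X)

/-- The set of strongly `κ`-isolated vertices of the whole graph. -/
noncomputable def IsolStrong {V : Type*} [Fintype V] [DecidableEq V] (m : V → V → ℕ) (κ : ℝ) :
    Finset V :=
  univ.filter (fun v => ∃ X, StrongBadSet m κ univ X ∧ v ∈ X)

/-- The subgraph induced on `A` is a `κ`-expander. -/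
def IsExpanderOn {V : Type*} [DecidableEq V] (m : V → V → ℕ) (κ : ℝ) (A : Finset V) : Prop :=
  ∀ X ⊆ A, 2 * (volOn m A X : ℝ) ≤ (volOn m A A : ℝ) →
    κ * (volOn m A X : ℝ) ≤ (eG m X (A \ X) : ℝ)

/-- for a connected multigraph `G` and a `κ²`-bad set `X`, with
`C 0, …, C (r-1)` the connected components of `G \ X` ordered by decreasing volume and
`Y = X ∪ C 1 ∪ ⋯ ∪ C (r-1)`, one has `G \ Y = C 0`, `C 0` is connected and
`e(Y, G\Y)/vol(Y) ≤ e(X, G\X)/vol(X)`. -/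
theorem stmt0 {V : Type*} [Fintype V] [DecidableEq V]
    (m : V → V → ℕ) (hsym : ∀ x y, m x y = m y x)
    (hconn : ConnOn m Finset.univ) (κ : ℝ)
    (X : Finset V) (hXconn : ConnOn m X) (hXne : X.Nonempty)
    (hXhalf : 2 * (volOn m Finset.univ X : ℝ) ≤ (volOn m Finset.univ Finset.univ : ℝ))
    (hXbad : (eG m X (Finset.univ \ X) : ℝ) < κ ^ 2 * (volOn m Finset.univ X : ℝ))
    (r : ℕ) (hr : 0 < r) (C : Fin r → Finset V)
    (hCdisj : ∀ i j, i ≠ j → Disjoint (C i) (C j))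
    (hCunion : Finset.univ \ X = Finset.univ.biUnion (fun i => C i))
    (hCconn : ∀ i, ConnOn m (C i))
    (hCne : ∀ i, (C i).Nonempty)
    (hCmax : ∀ i j, i ≠ j → eG m (C i) (C j) = 0)
    (hCord : ∀ i j : Fin r, i ≤ j →
      volOn m Finset.univ (C j) ≤ volOn m Finset.univ (C i))
    (Y : Finset V)
    (hY : Y = X ∪ (Finset.univ.filter (fun i : Fin r => i ≠ ⟨0, hr⟩)).biUnion
      (fun i => C i)) :
    Finset.univ \ Y = C ⟨0, hr⟩ ∧ ConnOn m (C ⟨0, hr⟩) ∧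
      (eG m Y (Finset.univ \ Y) : ℝ) * (volOn m Finset.univ X : ℝ) ≤
        (eG m X (Finset.univ \ X) : ℝ) * (volOn m Finset.univ Y : ℝ) := by
  classical
  set B := (Finset.univ.filter (fun i : Fin r => i ≠ ⟨0, hr⟩)).biUnion (fun i => C i) with hB
  have hC0sub : C ⟨0, hr⟩ ⊆ Finset.univ \ X := by
    rw [hCunion]; exact Finset.subset_biUnion_of_mem _ (mem_univ _)
  have hBsub : B ⊆ Finset.univ \ X := by
    rw [hCunion, hB]
    exact Finset.biUnion_subset_biUnion_of_subset_left _ (filter_subset _ _)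
  have hdisjXB : Disjoint X B :=
    Finset.disjoint_left.mpr (fun a haX haB => (Finset.mem_sdiff.mp (hBsub haB)).2 haX)
  have hC0B : Disjoint (C ⟨0, hr⟩) B := by
    rw [hB, Finset.disjoint_biUnion_right]
    intro i hi
    exact hCdisj _ _ (fun h => (mem_filter.mp hi).2 h.symm)
  have hsplit : ∀ a, a ∉ X ↔ a ∈ C ⟨0, hr⟩ ∨ a ∈ B := by
    intro a
    constructor
    · intro haX
      have : a ∈ Finset.univ.biUnion (fun i => C i) := by
        rw [← hCunion]; simp [haX]
      obtain ⟨i, -, hi⟩ := Finset.mem_biUnion.mp this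
      by_cases h : i = ⟨0, hr⟩
      · left; rwa [h] at hi
      · right; exact Finset.mem_biUnion.mpr ⟨i, by simp [h], hi⟩
    · rintro (h | h)
      · exact (Finset.mem_sdiff.mp (hC0sub h)).2
      · exact (Finset.mem_sdiff.mp (hBsub h)).2
  have hYcompl : Finset.univ \ Y = C ⟨0, hr⟩ := by
    ext a
    simp only [mem_sdiff, mem_univ, true_and, hY, ← hB, mem_union, not_or]
    constructor
    · rintro ⟨haX, haB⟩
      rcases (hsplit a).mp haX with h | h
      · exact h
      · exact absurd h haB
    · intro h
      refine ⟨(hsplit a).mpr (Or.inl h), fun hB' => ?_⟩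
      exact Finset.disjoint_left.mp hC0B h hB'
  have hBC0 : eG m B (C ⟨0, hr⟩) = 0 := by
    apply Finset.sum_eq_zero
    intro x hx
    obtain ⟨i, hi, hxi⟩ := Finset.mem_biUnion.mp hx
    have h0 : eG m (C i) (C ⟨0, hr⟩) = 0 := hCmax _ _ (mem_filter.mp hi).2
    exact Finset.sum_eq_zero_iff.mp h0 x hxi
  have h1 : eG m Y (Finset.univ \ Y) ≤ eG m X (Finset.univ \ X) := by
    rw [hYcompl, hY]
    unfold eG
    rw [Finset.sum_union hdisjXB]
    have : ∑ x ∈ B, ∑ y ∈ C ⟨0, hr⟩, m x y = 0 := hBC0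
    rw [this, add_zero]
    exact Finset.sum_le_sum (fun x _ =>
      Finset.sum_le_sum_of_subset hC0sub)
  have h2 : volOn m Finset.univ X ≤ volOn m Finset.univ Y := by
    unfold volOn eG
    exact Finset.sum_le_sum_of_subset (hY ▸ Finset.subset_union_left)
  exact ⟨hYcompl, hCconn _,
    mul_le_mul (Nat.cast_le.mpr h1) (Nat.cast_le.mpr h2)
      (Nat.cast_nonneg _) (Nat.cast_nonneg _)⟩
end

section
/- Let 0 < ε < 1 and κ > 0 satisfy κ < min((1−2ε)/3, 1−4ε). If G is a finite connected multigraph such that the total volume of its strongly κ-isolated vertices is at most ε·vol(G), then every κ²-isolated vertex of G is strongly κ-isolated; in particular the total volume of the κ²-isolated vertices is at most ε·vol(G). -/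
open Finset
open scoped Classical

/-!
Let `X` be a `κ²`-bad set. If some component `C` of `Xᶜ` carries at least half of the volume,
then `Cᶜ ⊇ X` is a strong `κ`-bad set: it is connected because every other component of `Xᶜ` is
attached to the connected set `X`, and its boundary consists of edges between `X` and `C`, fewer
than `κ² vol X ≤ κ vol Cᶜ`. Otherwise all components of `Xᶜ` are small. Those sending fewer than
`κ vol C` edges into `X` are then strong `κ`-bad sets, so their total volume is at most
`ε vol G`; the others receive at least `κ` times their volume from the fewer than `κ² vol X`
boundary edges of `X`, so their total volume is below `κ vol X`. Since `vol X ≤ vol G / 2`, this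
gives `vol G < (ε + (1 + κ) / 2) vol G`, which contradicts `κ ≤ 1 - 2ε`.
-/

open Relation

theorem Relation.ReflTransGen.exists_rel_of_not {α : Type*} {r : α → α → Prop} {p : α → Prop}
    {a b : α} (h : ReflTransGen r a b) (ha : p a) (hb : ¬p b) :
    ∃ c d, p c ∧ ¬p d ∧ r c d := by
  induction h with
  | refl => exact absurd ha hb
  | @tail c d _ hcd ih =>
    by_cases hc : p c
    · exact ⟨c, d, hc, hb, hcd⟩
    · exact ih hc

section EdgeCount

variable {V : Type*} [DecidableEq V] {m : V → V → ℕ}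

lemma eG_comm (hsym : ∀ x y, m x y = m y x) (X Y : Finset V) : eG m X Y = eG m Y X := by
  rw [eG, eG, sum_comm]
  exact sum_congr rfl fun y _ => sum_congr rfl fun x _ => hsym x y

lemma eG_union_left {X Y : Finset V} (h : Disjoint X Y) (Z : Finset V) :
    eG m (X ∪ Y) Z = eG m X Z + eG m Y Z :=
  sum_union h

lemma eG_union_right {Y Z : Finset V} (h : Disjoint Y Z) (X : Finset V) :
    eG m X (Y ∪ Z) = eG m X Y + eG m X Z := by
  rw [eG, eG, eG, ← sum_add_distrib]
  exact sum_congr rfl fun x _ => sum_union h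

lemma eG_mono_left {X X' : Finset V} (h : X ⊆ X') (Y : Finset V) : eG m X Y ≤ eG m X' Y :=
  sum_le_sum_of_subset h

lemma eG_mono_right {Y Y' : Finset V} (h : Y ⊆ Y') (X : Finset V) : eG m X Y ≤ eG m X Y' :=
  sum_le_sum fun _ _ => sum_le_sum_of_subset h

lemma eG_biUnion {ι : Type*} {s : Finset ι} {t : ι → Finset V}
    (hs : (s : Set ι).PairwiseDisjoint t) (Y : Finset V) :
    eG m (s.biUnion t) Y = ∑ i ∈ s, eG m (t i) Y :=
  sum_biUnion hs

end EdgeCount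

section Components

variable {V : Type*} (m : V → V → ℕ)

def AdjOn (X : Finset V) (a b : V) : Prop := a ∈ X ∧ b ∈ X ∧ 0 < m a b

-- Empty when `v ∉ S`.
noncomputable def component (S : Finset V) (v : V) : Finset V :=
  S.filter (ReflTransGen (AdjOn m S) v)

variable {m}

lemma reflTransGen_adjOn_symm (hsym : ∀ x y, m x y = m y x) {X : Finset V} {a b : V}
    (h : ReflTransGen (AdjOn m X) a b) : ReflTransGen (AdjOn m X) b a :=
  have : Std.Symm (AdjOn m X) := ⟨fun x y ⟨hx, hy, hxy⟩ => ⟨hy, hx, hsym x y ▸ hxy⟩⟩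
  Std.Symm.symm _ _ h

lemma reflTransGen_adjOn_mono {X Y : Finset V} (hXY : X ⊆ Y) {a b : V}
    (h : ReflTransGen (AdjOn m X) a b) : ReflTransGen (AdjOn m Y) a b :=
  ReflTransGen.mono (fun _ _ ⟨ha, hb, hab⟩ => ⟨hXY ha, hXY hb, hab⟩) _ _ h

lemma mem_component {S : Finset V} {v w : V} :
    w ∈ component m S v ↔ w ∈ S ∧ ReflTransGen (AdjOn m S) v w :=
  mem_filter

lemma mem_component_self {S : Finset V} {v : V} (hv : v ∈ S) : v ∈ component m S v :=
  mem_component.2 ⟨hv, .refl⟩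

lemma component_subset (S : Finset V) (v : V) : component m S v ⊆ S :=
  filter_subset _ _

lemma mem_component_of_adj {S : Finset V} {v a b : V} (ha : a ∈ component m S v)
    (hb : b ∈ S) (hab : 0 < m a b) : b ∈ component m S v := by
  rw [mem_component] at ha ⊢
  exact ⟨hb, ha.2.tail ⟨ha.1, hb, hab⟩⟩

lemma component_eq_of_mem (hsym : ∀ x y, m x y = m y x) {S : Finset V} {v w : V}
    (hw : w ∈ component m S v) : component m S w = component m S v := by
  rw [mem_component] at hw
  ext z
  simp only [mem_component]
  exact ⟨fun ⟨hz, h⟩ => ⟨hz, hw.2.trans h⟩,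
    fun ⟨hz, h⟩ => ⟨hz, (reflTransGen_adjOn_symm hsym hw.2).trans h⟩⟩

lemma notMem_component_of_mem_component (hsym : ∀ x y, m x y = m y x) {S : Finset V}
    {u p w : V} (hp : p ∈ S) (hpu : p ∉ component m S u) (hw : w ∈ component m S p) :
    w ∉ component m S u := fun hwu =>
  hpu (component_eq_of_mem hsym hwu ▸ component_eq_of_mem hsym hw ▸ mem_component_self hp)

lemma pairwiseDisjoint_component (hsym : ∀ x y, m x y = m y x) (S : Finset V)
    (s : Set (Finset V)) (hs : s ⊆ Set.range (component m S)) : s.PairwiseDisjoint id := by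
  rintro _ hC _ hD hCD
  obtain ⟨u, rfl⟩ := hs hC
  obtain ⟨v, rfl⟩ := hs hD
  refine disjoint_left.2 fun w hwu hwv => hCD ?_
  show component m S u = component m S v
  rw [← component_eq_of_mem hsym hwu, component_eq_of_mem hsym hwv]

lemma reflTransGen_adjOn_component {S : Finset V} {v x y : V} (hx : x ∈ component m S v)
    (h : ReflTransGen (AdjOn m S) x y) : ReflTransGen (AdjOn m (component m S v)) x y := by
  induction h with
  | refl => exact .refl
  | @tail b c hxb hbc ih =>
    have hb : b ∈ component m S v := mem_component.2 ⟨hbc.1, (mem_component.1 hx).2.trans hxb⟩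
    exact ih.tail ⟨hb, mem_component_of_adj hb hbc.2.1 hbc.2.2, hbc.2.2⟩

lemma connOn_component (hsym : ∀ x y, m x y = m y x) (S : Finset V) (v : V) :
    ConnOn m (component m S v) := fun _ hx _ hy =>
  reflTransGen_adjOn_component hx
    ((reflTransGen_adjOn_symm hsym (mem_component.1 hx).2).trans (mem_component.1 hy).2)

lemma eG_component_sdiff_component [DecidableEq V] (S : Finset V) (v : V) :
    eG m (component m S v) (S \ component m S v) = 0 :=
  sum_eq_zero fun _ ha => sum_eq_zero fun b hb => by
    by_contra h
    exact (mem_sdiff.1 hb).2 (mem_component_of_adj ha (mem_sdiff.1 hb).1 (Nat.pos_of_ne_zero h))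

lemma mul_eG_le_of_forall_component [DecidableEq V] (hsym : ∀ x y, m x y = m y x) {κ : ℝ}
    {S W X Y : Finset V} (hWS : W ⊆ S) (hW : ∀ a ∈ W, component m S a ⊆ W)
    (h : ∀ a ∈ W, κ * (eG m (component m S a) X : ℝ) ≤ eG m (component m S a) Y) :
    κ * (eG m W X : ℝ) ≤ eG m W Y := by
  have hdisj : ((W.image (component m S) : Finset _) : Set (Finset V)).PairwiseDisjoint id :=
    pairwiseDisjoint_component hsym S _ (by simp)
  have hW' : (W.image (component m S)).biUnion id = W := by
    ext w
    simp only [mem_biUnion, mem_image, id]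
    exact ⟨fun ⟨_, ⟨a, ha, hC⟩, hw⟩ => hW a ha (hC ▸ hw),
      fun hw => ⟨_, ⟨w, hw, rfl⟩, mem_component_self (hWS hw)⟩⟩
  rw [← hW', eG_biUnion hdisj, eG_biUnion hdisj]
  push_cast
  rw [mul_sum]
  refine sum_le_sum ?_
  simp only [mem_image, id]
  rintro _ ⟨a, ha, rfl⟩
  exact h a ha

end Components

section Complement

variable {V : Type*} [Fintype V] [DecidableEq V] {m : V → V → ℕ}

lemma subset_compl_component (X : Finset V) (u : V) :
    X ⊆ univ \ component m (univ \ X) u := fun x hx =>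
  mem_sdiff.2 ⟨mem_univ x, fun hxC => (mem_sdiff.1 (component_subset _ _ hxC)).2 hx⟩

lemma compl_component_eq_union (X : Finset V) (u : V) :
    univ \ component m (univ \ X) u = X ∪ ((univ \ X) \ component m (univ \ X) u) := by
  ext z
  by_cases hz : z ∈ X
  · simp [hz, subset_compl_component X u hz]
  · simp [hz]

lemma exists_adj_component_of_notMem (hconn : ConnOn m univ) {X : Finset V} {x₀ p : V}
    (hx₀ : x₀ ∈ X) (hp : p ∉ X) : ∃ a ∈ component m (univ \ X) p, ∃ x ∈ X, 0 < m a x := by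
  have hpS : p ∈ univ \ X := mem_sdiff.2 ⟨mem_univ p, hp⟩
  obtain ⟨a, x, ha, hx, -, -, hax⟩ := (hconn p (mem_univ p) x₀ (mem_univ x₀)).exists_rel_of_not
    (p := (· ∈ component m (univ \ X) p)) (mem_component_self hpS)
    (fun h => (mem_sdiff.1 (component_subset _ _ h)).2 hx₀)
  refine ⟨a, ha, x, ?_, hax⟩
  by_contra hxX
  exact hx (mem_component_of_adj ha (mem_sdiff.2 ⟨mem_univ x, hxX⟩) hax)

lemma exists_reflTransGen_compl_component (hsym : ∀ x y, m x y = m y x)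
    (hconn : ConnOn m univ) {X : Finset V} {x₀ u p : V} (hx₀ : x₀ ∈ X)
    (hp : p ∉ component m (univ \ X) u) :
    ∃ x ∈ X, ReflTransGen (AdjOn m (univ \ component m (univ \ X) u)) p x := by
  by_cases hpX : p ∈ X
  · exact ⟨p, hpX, .refl⟩
  have hpS : p ∈ univ \ X := mem_sdiff.2 ⟨mem_univ p, hpX⟩
  have hsub : component m (univ \ X) p ⊆ univ \ component m (univ \ X) u := fun w hw =>
    mem_sdiff.2 ⟨mem_univ w, notMem_component_of_mem_component hsym hpS hp hw⟩
  obtain ⟨a, ha, x, hx, hax⟩ := exists_adj_component_of_notMem hconn hx₀ hpX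
  have hpa := reflTransGen_adjOn_mono hsub
    (connOn_component hsym _ p p (mem_component_self hpS) a ha)
  exact ⟨x, hx, hpa.tail ⟨hsub ha, subset_compl_component X u hx, hax⟩⟩

lemma connOn_compl_component (hsym : ∀ x y, m x y = m y x) (hconn : ConnOn m univ)
    {X : Finset V} (hX : ConnOn m X) (hXne : X.Nonempty) (u : V) :
    ConnOn m (univ \ component m (univ \ X) u) := by
  obtain ⟨x₀, hx₀⟩ := hXne
  intro p hp q hq
  obtain ⟨x, hx, hpx⟩ := exists_reflTransGen_compl_component hsym hconn hx₀ (mem_sdiff.1 hp).2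
  obtain ⟨y, hy, hqy⟩ := exists_reflTransGen_compl_component hsym hconn hx₀ (mem_sdiff.1 hq).2
  exact (hpx.trans (reflTransGen_adjOn_mono (subset_compl_component X u) (hX x hx y hy))).trans
    (reflTransGen_adjOn_symm hsym hqy)

lemma eG_component_compl (X : Finset V) (u : V) :
    eG m (component m (univ \ X) u) (univ \ component m (univ \ X) u) =
      eG m (component m (univ \ X) u) X := by
  rw [compl_component_eq_union, eG_union_right (disjoint_sdiff.mono_right sdiff_subset),
    eG_component_sdiff_component, add_zero]

lemma strongBadSet_component (hsym : ∀ x y, m x y = m y x) (hconn : ConnOn m univ) {κ : ℝ}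
    {X : Finset V} (hX : ConnOn m X) (hXne : X.Nonempty) {u : V} (hu : u ∉ X)
    (hhalf : 2 * (volOn m univ (component m (univ \ X) u) : ℝ) ≤ volOn m univ univ)
    (hcut : (eG m (component m (univ \ X) u) X : ℝ) <
      κ * volOn m univ (component m (univ \ X) u)) :
    StrongBadSet m κ univ (component m (univ \ X) u) :=
  ⟨⟨subset_univ _, ⟨u, mem_component_self (mem_sdiff.2 ⟨mem_univ u, hu⟩)⟩,
    connOn_component hsym _ _, hhalf, by rwa [eG_component_compl]⟩,
    connOn_compl_component hsym hconn hX hXne u⟩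

lemma strongBadSet_compl_component (hsym : ∀ x y, m x y = m y x) (hconn : ConnOn m univ)
    {κ : ℝ} (hκ : 0 ≤ κ) {X : Finset V} (hX : ConnOn m X) (hXne : X.Nonempty)
    (hXcut : (eG m X (univ \ X) : ℝ) < κ * volOn m univ X) {u : V}
    (hhalf : (volOn m univ univ : ℝ) ≤ 2 * volOn m univ (component m (univ \ X) u)) :
    StrongBadSet m κ univ (univ \ component m (univ \ X) u) := by
  set C := component m (univ \ X) u
  have hcompl : univ \ (univ \ C) = C := by simp
  have hvol : volOn m univ (univ \ C) + volOn m univ C = volOn m univ univ := by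
    rw [volOn, volOn, volOn, ← eG_union_left sdiff_disjoint, sdiff_union_of_subset (subset_univ C)]
  have hvolR : (volOn m univ (univ \ C) : ℝ) + volOn m univ C = volOn m univ univ := by
    exact_mod_cast hvol
  have hcut : eG m (univ \ C) C ≤ eG m X (univ \ X) := by
    rw [compl_component_eq_union, eG_union_left (disjoint_sdiff.mono_right sdiff_subset),
      eG_comm hsym ((univ \ X) \ C) C, eG_component_sdiff_component, add_zero]
    exact eG_mono_right (component_subset _ _) X
  have hXY : volOn m univ X ≤ volOn m univ (univ \ C) :=
    eG_mono_left (subset_compl_component X u) univ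
  refine ⟨⟨subset_univ _, hXne.mono (subset_compl_component X u),
    connOn_compl_component hsym hconn hX hXne u, ?_, ?_⟩, ?_⟩
  · linarith
  · rw [hcompl]
    calc (eG m (univ \ C) C : ℝ) ≤ eG m X (univ \ X) := by exact_mod_cast hcut
      _ < κ * volOn m univ X := hXcut
      _ ≤ κ * volOn m univ (univ \ C) := by gcongr
  · rw [hcompl]
    exact connOn_component hsym _ _

end Complement

section BadSets

variable {V : Type*} [Fintype V] [DecidableEq V] {m : V → V → ℕ}

lemma exists_large_component (hsym : ∀ x y, m x y = m y x) (hconn : ConnOn m univ)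
    {ε κ : ℝ} (hκ0 : 0 < κ) (hκ : κ ≤ 1 - 2 * ε)
    (hiso : (volOn m univ (IsolStrong m κ) : ℝ) ≤ ε * volOn m univ univ)
    {X : Finset V} (hX : BadSet m (κ ^ 2) univ X) :
    ∃ u, (volOn m univ univ : ℝ) ≤ 2 * volOn m univ (component m (univ \ X) u) := by
  obtain ⟨-, hXne, hXconn, hXhalf, hXcut⟩ := hX
  by_contra! hsmall
  set S := univ \ X
  set T := S.filter fun w => (eG m (component m S w) X : ℝ) < κ * volOn m univ (component m S w)
  set B := S \ T
  have hT : T ⊆ IsolStrong m κ := fun w hw => by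
    obtain ⟨hwS, hwcut⟩ := mem_filter.1 hw
    exact mem_filter.2 ⟨mem_univ w, _, strongBadSet_component hsym hconn hXconn hXne
      (mem_sdiff.1 hwS).2 (hsmall w).le hwcut, mem_component_self hwS⟩
  have hBclosed : ∀ a ∈ B, component m S a ⊆ B := fun a ha w hw => by
    have hwT : w ∉ T := by
      rw [mem_filter, component_eq_of_mem hsym hw]
      exact fun hwT => (mem_sdiff.1 ha).2 (mem_filter.2 ⟨(mem_sdiff.1 ha).1, hwT.2⟩)
    exact mem_sdiff.2 ⟨component_subset S a hw, hwT⟩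
  have hB : κ * (volOn m univ B : ℝ) ≤ eG m B X :=
    mul_eG_le_of_forall_component hsym sdiff_subset hBclosed fun a ha =>
      not_lt.1 fun h => (mem_sdiff.1 ha).2 (mem_filter.2 ⟨(mem_sdiff.1 ha).1, h⟩)
  have hBX : eG m B X ≤ eG m X S := eG_comm hsym X S ▸ eG_mono_left sdiff_subset X
  have hTvol : volOn m univ T ≤ volOn m univ (IsolStrong m κ) := eG_mono_left hT univ
  have hvol : volOn m univ X + volOn m univ T + volOn m univ B = volOn m univ univ := by
    rw [volOn, volOn, volOn, volOn, add_assoc, ← eG_union_left disjoint_sdiff,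
      union_sdiff_of_subset (filter_subset _ _), ← eG_union_left disjoint_sdiff,
      union_sdiff_of_subset (subset_univ X)]
  have hvolR : (volOn m univ X : ℝ) + volOn m univ T + volOn m univ B = volOn m univ univ := by
    exact_mod_cast hvol
  have hBX' : (eG m B X : ℝ) ≤ eG m X S := by exact_mod_cast hBX
  have hTvol' : (volOn m univ T : ℝ) ≤ volOn m univ (IsolStrong m κ) := by exact_mod_cast hTvol
  have hBsmall : (volOn m univ B : ℝ) < κ * volOn m univ X := by
    refine lt_of_mul_lt_mul_left ?_ hκ0.le
    calc κ * (volOn m univ B : ℝ) ≤ eG m X S := hB.trans hBX'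
      _ < κ ^ 2 * volOn m univ X := hXcut
      _ = κ * (κ * volOn m univ X) := by ring
  nlinarith [(Nat.cast_nonneg (volOn m univ X) : (0 : ℝ) ≤ _)]

theorem exists_strongBadSet_superset_of_badSet (hsym : ∀ x y, m x y = m y x)
    (hconn : ConnOn m univ) {ε κ : ℝ} (hε : 0 ≤ ε) (hκ0 : 0 < κ) (hκ : κ ≤ 1 - 2 * ε)
    (hiso : (volOn m univ (IsolStrong m κ) : ℝ) ≤ ε * volOn m univ univ)
    {X : Finset V} (hX : BadSet m (κ ^ 2) univ X) :
    ∃ Y, StrongBadSet m κ univ Y ∧ X ⊆ Y := by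
  obtain ⟨u, hu⟩ := exists_large_component hsym hconn hκ0 hκ hiso hX
  obtain ⟨-, hXne, hXconn, -, hXcut⟩ := hX
  have hκ2 : κ ^ 2 * (volOn m univ X : ℝ) ≤ κ * volOn m univ X := by
    gcongr
    nlinarith
  exact ⟨_, strongBadSet_compl_component hsym hconn hκ0.le hXconn hXne (hXcut.trans_le hκ2) hu,
    subset_compl_component X u⟩

end BadSets

theorem stmt1_general {V : Type*} [Fintype V] [DecidableEq V]
    (m : V → V → ℕ) (hsym : ∀ x y, m x y = m y x)
    (hconn : ConnOn m Finset.univ)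
    (ε κ : ℝ) (hε0 : 0 < ε) (hκ0 : 0 < κ)
    (hκ : κ < min ((1 - 2 * ε) / 3) (1 - 4 * ε))
    (hiso : (volOn m Finset.univ (IsolStrong m κ) : ℝ) ≤
      ε * (volOn m Finset.univ Finset.univ : ℝ)) :
    Isol m (κ ^ 2) ⊆ IsolStrong m κ ∧
      (volOn m Finset.univ (Isol m (κ ^ 2)) : ℝ) ≤
        ε * (volOn m Finset.univ Finset.univ : ℝ) := by
  have hκε : κ ≤ 1 - 2 * ε := by linarith [hκ.trans_le (min_le_left _ _)]
  have hsub : Isol m (κ ^ 2) ⊆ IsolStrong m κ := fun v hv => by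
    obtain ⟨-, X, hX, hvX⟩ := mem_filter.1 hv
    obtain ⟨Y, hY, hXY⟩ :=
      exists_strongBadSet_superset_of_badSet hsym hconn hε0.le hκ0 hκε hiso hX
    exact mem_filter.2 ⟨mem_univ v, Y, hY, hXY hvX⟩
  refine ⟨hsub, le_trans ?_ hiso⟩
  exact_mod_cast eG_mono_left hsub univ

/-- if `0 < ε < 1`, `κ > 0`, `κ < min((1-2ε)/3, 1-4ε)` and the strongly
`κ`-isolated vertices of the connected multigraph `G` have volume at most `ε·vol(G)`,
then every `κ²`-isolated vertex is strongly `κ`-isolated, and in particular the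
`κ²`-isolated vertices have volume at most `ε·vol(G)`. -/
theorem stmt1 {V : Type*} [Fintype V] [DecidableEq V]
    (m : V → V → ℕ) (hsym : ∀ x y, m x y = m y x)
    (hconn : ConnOn m Finset.univ)
    (ε κ : ℝ) (hε0 : 0 < ε) (hε1 : ε < 1) (hκ0 : 0 < κ)
    (hκ : κ < min ((1 - 2 * ε) / 3) (1 - 4 * ε))
    (hiso : (volOn m Finset.univ (IsolStrong m κ) : ℝ) ≤
      ε * (volOn m Finset.univ Finset.univ : ℝ)) :
    Isol m (κ ^ 2) ⊆ IsolStrong m κ ∧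
      (volOn m Finset.univ (Isol m (κ ^ 2)) : ℝ) ≤
        ε * (volOn m Finset.univ Finset.univ : ℝ) :=
  stmt1_general m hsym hconn ε κ hε0 hκ0 hκ hiso
end

section
/- Let G₀ = G be a finite multigraph, and suppose S₁,...,S_t are removed successively with each S_i a κ_ε-bad set of G_{i−1}. Let 𝒥 be the set of indices i ≤ t such that S_i is in the same connected component as S_t within G \ G_t, and set S_𝒥 = ∪_{i∈𝒥} S_i. Then κ_ε · vol_G(S_𝒥) > e_G(S_𝒥, G \ S_𝒥). -/
open Finset
open scoped Classical

/-!
Each `S_{i+1}` with `i ∈ 𝒥` is connected and disjoint from `G_t`, so any edge from it to a vertex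
outside `S_𝒥` cannot end in another removed set `S_{j+1}` (that set would join the component of
`S_t`, i.e. `j ∈ 𝒥`); it ends in `G_t ⊆ G_i`. Hence the edges leaving `S_𝒥` from `S_{i+1}` are
among those leaving `S_{i+1}` inside `G_i`, fewer than `κ vol_{G_i}(S_{i+1}) ≤ κ vol_G(S_{i+1})`
of them. Summing over the disjoint pieces `S_{i+1}`, `i ∈ 𝒥`, gives the claim.
-/

section Multigraph

variable {V : Type*} [DecidableEq V] {m : V → V → ℕ}

lemma eG_le_eG_of_forall_pos {X Y Y' : Finset V}
    (h : ∀ x ∈ X, ∀ y ∈ Y, 0 < m x y → y ∈ Y') : eG m X Y ≤ eG m X Y' :=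
  sum_le_sum fun x hx => sum_le_sum_of_ne_zero fun y hy hne => h x hx y hy (Nat.pos_of_ne_zero hne)

lemma volOn_mono {A B : Finset V} (hAB : A ⊆ B) (X : Finset V) : volOn m A X ≤ volOn m B X :=
  sum_le_sum fun _ _ => sum_le_sum_of_subset hAB

lemma eG_biUnion_left {ι : Type*} {J : Finset ι} {T : ι → Finset V}
    (hT : (J : Set ι).PairwiseDisjoint T) (Y : Finset V) :
    eG m (J.biUnion T) Y = ∑ i ∈ J, eG m (T i) Y :=
  sum_biUnion hT

lemma ConnOn.reflTransGen_of_subset {X D : Finset V} (hX : ConnOn m X) (hXD : X ⊆ D)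
    {x y : V} (hx : x ∈ X) (hy : y ∈ X) :
    Relation.ReflTransGen (fun a b => a ∈ D ∧ b ∈ D ∧ 0 < m a b) x y :=
  Relation.ReflTransGen.mono (fun _ _ ⟨ha, hb, hab⟩ => ⟨hXD ha, hXD hb, hab⟩) x y (hX x hx y hy)

lemma BadSet.pos {κ : ℝ} {A X : Finset V} (hX : BadSet m κ A X) : 0 < κ :=
  pos_of_mul_pos_left ((Nat.cast_nonneg _).trans_lt hX.2.2.2.2) (Nat.cast_nonneg _)

lemma BadSet.eG_lt {κ : ℝ} {A B X Y : Finset V} (hX : BadSet m κ A X) (hAB : A ⊆ B)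
    (hY : ∀ x ∈ X, ∀ y ∈ Y, 0 < m x y → y ∈ A \ X) :
    (eG m X Y : ℝ) < κ * volOn m B X :=
  calc (eG m X Y : ℝ) ≤ eG m X (A \ X) := by exact_mod_cast eG_le_eG_of_forall_pos hY
    _ < κ * volOn m A X := hX.2.2.2.2
    _ ≤ κ * volOn m B X := by gcongr; exacts [hX.pos.le, volOn_mono hAB X]

lemma eG_biUnion_lt {ι : Type*} {κ : ℝ} {J : Finset ι} {T : ι → Finset V} {B Y : Finset V}
    (hJ : J.Nonempty) (hT : (J : Set ι).PairwiseDisjoint T)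
    (h : ∀ i ∈ J, (eG m (T i) Y : ℝ) < κ * volOn m B (T i)) :
    (eG m (J.biUnion T) Y : ℝ) < κ * volOn m B (J.biUnion T) := by
  rw [eG_biUnion_left hT, volOn, eG_biUnion_left hT]
  push_cast
  rw [mul_sum]
  exact sum_lt_sum_of_nonempty hJ h

end Multigraph

section Removal

variable {V : Type*} [Fintype V] [DecidableEq V] {S Gs : ℕ → Finset V}

lemma notMem_iff_exists_removed (hG : ∀ i, Gs i = univ \ (range i).biUnion fun j => S (j + 1))
    {t : ℕ} {x : V} : x ∉ Gs t ↔ ∃ j < t, x ∈ S (j + 1) := by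
  simp [hG]

lemma antitone_of_removed (hG : ∀ i, Gs i = univ \ (range i).biUnion fun j => S (j + 1)) :
    Antitone Gs := fun i j hij => by
  rw [hG, hG]
  exact sdiff_subset_sdiff subset_rfl (biUnion_subset_biUnion_of_subset_left _ (by simpa))

lemma pairwiseDisjoint_of_removed (hG : ∀ i, Gs i = univ \ (range i).biUnion fun j => S (j + 1))
    {t : ℕ} (hS : ∀ i < t, S (i + 1) ⊆ Gs i) :
    ((range t : Finset ℕ) : Set ℕ).PairwiseDisjoint fun i => S (i + 1) := by
  suffices h : ∀ i j, i < j → j < t → Disjoint (S (i + 1)) (S (j + 1)) by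
    intro i hi j hj hne
    simp only [coe_range, Set.mem_Iio] at hi hj
    rcases lt_or_gt_of_ne hne with hij | hji
    exacts [h i j hij hj, (h j i hji hi).symm]
  refine fun i j hij hj => disjoint_left.2 fun x hxi hxj => ?_
  exact (notMem_iff_exists_removed hG).2 ⟨i, hij, hxi⟩ (hS j hj hxj)

lemma mem_biUnion_of_adj_of_notMem {m : V → V → ℕ} (hsym : ∀ x y, m x y = m y x)
    (hG : ∀ i, Gs i = univ \ (range i).biUnion fun j => S (j + 1))
    {t : ℕ} (hconn : ∀ i < t, ConnOn m (S (i + 1))) {J : Finset ℕ}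
    (hJ : ∀ i < t, (i ∈ J ↔ ∃ x ∈ S (i + 1), ∃ y ∈ S t,
      Relation.ReflTransGen
        (fun a b => a ∈ univ \ Gs t ∧ b ∈ univ \ Gs t ∧ 0 < m a b) x y))
    {i : ℕ} (hi : i < t) (hiJ : i ∈ J) {x y : V} (hx : x ∈ S (i + 1)) (hxy : 0 < m x y)
    (hy : y ∉ Gs t) : y ∈ J.biUnion fun j => S (j + 1) := by
  obtain ⟨j, hj, hyj⟩ := (notMem_iff_exists_removed hG).1 hy
  obtain ⟨x₀, hx₀, z, hz, hx₀z⟩ := (hJ i hi).1 hiJ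
  have hSi : S (i + 1) ⊆ univ \ Gs t := fun a ha =>
    mem_sdiff.2 ⟨mem_univ a, (notMem_iff_exists_removed hG).2 ⟨i, hi, ha⟩⟩
  have hxx₀ := (hconn i hi).reflTransGen_of_subset hSi hx hx₀
  have hyz := Relation.ReflTransGen.head ⟨by simpa using hy, hSi hx, hsym x y ▸ hxy⟩
    (hxx₀.trans hx₀z)
  exact mem_biUnion.2 ⟨j, (hJ j hj).2 ⟨y, hyj, z, hz, hyz⟩, hyj⟩

end Removal

theorem stmt5_general {V : Type*} [Fintype V] [DecidableEq V]
    (m : V → V → ℕ) (hsym : ∀ x y, m x y = m y x)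
    (κε : ℝ)
    (t : ℕ) (S Gs : ℕ → Finset V)
    (hG : ∀ i, Gs i = Finset.univ \ (Finset.range i).biUnion (fun j => S (j + 1)))
    (hbad : ∀ i < t, BadSet m κε (Gs i) (S (i + 1)))
    (J : Finset ℕ) (hJsub : J ⊆ Finset.range t) (hJt : t - 1 ∈ J)
    (hJ : ∀ i < t, (i ∈ J ↔ ∃ x ∈ S (i + 1), ∃ y ∈ S t,
      Relation.ReflTransGen
        (fun a b => a ∈ Finset.univ \ Gs t ∧ b ∈ Finset.univ \ Gs t ∧ 0 < m a b) x y))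
    (SJ : Finset V) (hSJ : SJ = J.biUnion (fun i => S (i + 1))) :
    (eG m SJ (Finset.univ \ SJ) : ℝ) < κε * (volOn m Finset.univ SJ : ℝ) := by
  have hlt : ∀ i ∈ J, i < t := fun i hi => mem_range.1 (hJsub hi)
  have hdisj : (J : Set ℕ).PairwiseDisjoint fun i => S (i + 1) :=
    (pairwiseDisjoint_of_removed hG fun i hi => (hbad i hi).1).subset (coe_subset.2 hJsub)
  subst hSJ
  refine eG_biUnion_lt ⟨t - 1, hJt⟩ hdisj fun i hi =>
    (hbad i (hlt i hi)).eG_lt (subset_univ _) fun x hx y hy hxy => ?_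
  have hyJ : y ∉ J.biUnion fun j => S (j + 1) := (mem_sdiff.1 hy).2
  have hyGt : y ∈ Gs t := by
    by_contra hyGt
    exact hyJ (mem_biUnion_of_adj_of_notMem hsym hG (fun j hj => (hbad j hj).2.2.1) hJ
      (hlt i hi) hi hx hxy hyGt)
  exact mem_sdiff.2 ⟨antitone_of_removed hG (hlt i hi).le hyGt,
    fun hyi => hyJ (mem_biUnion.2 ⟨i, hi, hyi⟩)⟩

/-- with `S₁, …, S_t` removed successively (each `Sᵢ` a `κ_ε`-bad set of
`Gᵢ₋₁`), let `𝒥` be the set of indices `i ≤ t` such that `Sᵢ` lies in the same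
connected component as `S_t` inside `G \ G_t`, and `S_𝒥 = ⋃_{i ∈ 𝒥} Sᵢ`.
Then `κ_ε · vol_G(S_𝒥) > e_G(S_𝒥, G \ S_𝒥)`.
(Indices are shifted: `S (i+1)` for `i < t` plays the role of `S_{i+1}`.) -/
theorem stmt5 {V : Type*} [Fintype V] [DecidableEq V]
    (m : V → V → ℕ) (hsym : ∀ x y, m x y = m y x)
    (κε : ℝ) (hκε : 0 < κε)
    (t : ℕ) (ht : 0 < t) (S Gs : ℕ → Finset V)
    (hG : ∀ i, Gs i = Finset.univ \ (Finset.range i).biUnion (fun j => S (j + 1)))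
    (hbad : ∀ i < t, BadSet m κε (Gs i) (S (i + 1)))
    (J : Finset ℕ) (hJsub : J ⊆ Finset.range t) (hJt : t - 1 ∈ J)
    (hJ : ∀ i < t, (i ∈ J ↔ ∃ x ∈ S (i + 1), ∃ y ∈ S t,
      Relation.ReflTransGen
        (fun a b => a ∈ Finset.univ \ Gs t ∧ b ∈ Finset.univ \ Gs t ∧ 0 < m a b) x y))
    (SJ : Finset V) (hSJ : SJ = J.biUnion (fun i => S (i + 1))) :
    (eG m SJ (Finset.univ \ SJ) : ℝ) < κε * (volOn m Finset.univ SJ : ℝ) :=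
  stmt5_general m hsym κε t S Gs hG hbad J hJsub hJt hJ SJ hSJ
end

section
/- Let M be a map (graph embedded in an oriented surface) with face degrees bounded by D, let G* be an induced subgraph of the dual map M*, and let G be the subgraph of M generated by the edges dual to edges of G*. For any vertex subset X of G, let X* be the set of faces (vertices of G*) incident to at least one vertex of X. Then vol_G(X) ≤ vol_{G*}(X*). -/
open Finset
open scoped Classical

/-- A combinatorial map (a multigraph embedded in a compact connected oriented surface),
encoded via its darts (oriented edges): `alpha` is the fixed-point-free edge involution,
`sigma` is the rotation of darts around their starting vertex, `vtx d` is the starting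
vertex of dart `d` and `fc d` is the face on a fixed side of `d`; vertices are exactly
the orbits of `sigma` and faces exactly the orbits of `sigma * alpha`. -/
structure CombMap (D V F : Type*) where
  sigma : Equiv.Perm D
  alpha : Equiv.Perm D
  alpha_invol : ∀ d, alpha (alpha d) = d
  alpha_ne : ∀ d, alpha d ≠ d
  vtx : D → V
  fc : D → F
  vtx_surj : Function.Surjective vtx
  fc_surj : Function.Surjective fc
  vtx_sigma : ∀ d, vtx (sigma d) = vtx d
  vtx_orbit : ∀ d d', vtx d = vtx d' → sigma.SameCycle d d'
  fc_rot : ∀ d, fc (sigma (alpha d)) = fc d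
  fc_orbit : ∀ d d', fc d = fc d' → (sigma * alpha).SameCycle d d'

variable {D V F : Type*}

/-- Degree of a face: the number of incident edge-sides (darts). -/
noncomputable def faceDeg [Fintype D] (M : CombMap D V F) (φ : F) : ℕ :=
  (univ.filter (fun d => M.fc d = φ)).card

/-- Darts of the subgraph `G` of `M` generated by the edges dual to the edges of the
induced subgraph `G*` of the dual map `M*` with vertex set `F'` (a set of faces of `M`):
these are the darts both of whose sides lie in `F'`.  The dual map `M*` has one vertex
per face of `M` and an edge dual to each edge of `M`, so these darts simultaneously
carry `G` (via `vtx`) and `G*` (via `fc`). -/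
noncomputable def dartsG [Fintype D] (M : CombMap D V F) (F' : Finset F) : Finset D :=
  univ.filter (fun d => M.fc d ∈ F' ∧ M.fc (M.alpha d) ∈ F')

/-- Volume in `G*` of a set `Y` of faces: the number of darts of `G*` starting in `Y`. -/
noncomputable def volStar [Fintype D] (M : CombMap D V F) (F' : Finset F)
    [DecidableEq F] (Y : Finset F) : ℕ :=
  ((dartsG M F').filter (fun d => M.fc d ∈ Y)).card

/-- Number of oriented edges of `G*` from `Y` to `Z`. -/
noncomputable def eStar [Fintype D] (M : CombMap D V F) (F' : Finset F)
    [DecidableEq F] (Y Z : Finset F) : ℕ :=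
  ((dartsG M F').filter (fun d => M.fc d ∈ Y ∧ M.fc (M.alpha d) ∈ Z)).card

/-- Volume in `G` of a set `X` of vertices: the number of darts of `G` starting in `X`. -/
noncomputable def volG [Fintype D] (M : CombMap D V F) (F' : Finset F)
    [DecidableEq V] (X : Finset V) : ℕ :=
  ((dartsG M F').filter (fun d => M.vtx d ∈ X)).card

/-- Number of oriented edges of `G` from `X` to its complement `G \ X`. -/
noncomputable def eCross [Fintype D] (M : CombMap D V F) (F' : Finset F)
    [DecidableEq V] (X : Finset V) : ℕ :=
  ((dartsG M F').filter (fun d => M.vtx d ∈ X ∧ M.vtx (M.alpha d) ∉ X)).card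

/-- `X*`: the faces of `G*` incident to at least one vertex of `X`. -/
noncomputable def Xstar [Fintype D] (M : CombMap D V F) (F' : Finset F)
    [DecidableEq V] (X : Finset V) : Finset F :=
  F'.filter (fun φ => ∃ d, M.fc d = φ ∧ M.vtx d ∈ X)

/-- with `M` a map whose face degrees are bounded by `D₀`, `G*` the induced
subgraph of the dual `M*` on the face set `F'`, `G ⊂ M` generated by the duals of the
edges of `G*`, and `X*` the faces of `G*` incident to a vertex of `X`, we have
`vol_G(X) ≤ vol_{G*}(X*)`. -/
theorem stmt6 {D V F : Type*} [Fintype D] [DecidableEq D] [DecidableEq V] [DecidableEq F]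
    (M : CombMap D V F) (D₀ : ℕ) (hdeg : ∀ φ, faceDeg M φ ≤ D₀)
    (F' : Finset F) (X : Finset V) :
    volG M F' X ≤ volStar M F' (Xstar M F' X) := by
  apply Finset.card_le_card
  intro d hd
  simp only [Finset.mem_filter, dartsG, Xstar, Finset.mem_univ, true_and] at hd ⊢
  exact ⟨hd.1, hd.1.1, d, rfl, hd.2⟩
end
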